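/- arXiv:1305.1233 — 2 statements merged into one kernel-verified Lean document; each statement's English description precedes it below -/
import Mathlib

section
/- Let κ₀, κ : (0,∞) → ℝ be continuous with κ(r)⁻ ≤ κ₀(r)⁻ + 2L for all r > 0 and κ(r)⁻ ≤ κ₀(r)⁻ for r > R, where L ≥ 0 and R ≥ 0. Let 0 < R₁ and define c⁻¹ = ∫₀^{R₁} ∫₀ˢ exp((1/4)∫ₜˢ u·κ(u)⁻ du) dt ds and c₀⁻¹ analogously with κ₀. If R ≤ R₁ and the κ₀-integrals are finite, then c ≥ c₀·exp(−L·R²/4). -/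
/-!
Since `κ⁻ ≤ κ₀⁻ + 2L·1_{r ≤ R}`, for `0 ≤ t ≤ s` the exponent `∫ₜˢ u κ(u)⁻ du` exceeds its
`κ₀`-counterpart by at most `∫₀^R 2Lu du = LR²`. Integrating the resulting pointwise bound on
the integrands gives `c⁻¹ ≤ exp (LR²/4) c₀⁻¹`, and `c⁻¹ ≥ R₁²/2 > 0` because the integrand
is at least `1`.
-/

open MeasureTheory Set intervalIntegral Real

/-- The quantity `c⁻¹` of the paper, for `f u = u κ(u)⁻` and `a = 1/4`. -/
noncomputable def doubleExpIntegral (a : ℝ) (f : ℝ → ℝ) (R₁ : ℝ) : ℝ :=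
  ∫ s in (0:ℝ)..R₁, ∫ t in (0:ℝ)..s, exp (a * ∫ u in t..s, f u)

section Perturbation

variable {f f₀ : ℝ → ℝ} {L R t s : ℝ}

theorem integral_indicator_Iic_mul_le (hL : 0 ≤ L) (hR : 0 ≤ R) (ht : 0 ≤ t) (hts : t ≤ s) :
    ∫ u in t..s, (Iic R).indicator (fun u => 2 * L * u) u ≤ L * R ^ 2 := by
  calc ∫ u in t..s, (Iic R).indicator (fun u => 2 * L * u) u
      = ∫ u in Ioc t s ∩ Iic R, 2 * L * u := by
        rw [integral_of_le hts, setIntegral_indicator measurableSet_Iic]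
    _ ≤ ∫ u in Ioc 0 R, 2 * L * u := by
        refine setIntegral_mono_set (continuous_const.mul continuous_id).integrableOn_Ioc ?_ ?_
        · filter_upwards [ae_restrict_mem measurableSet_Ioc] with u hu
          have := hu.1
          positivity
        · exact Filter.Eventually.of_forall fun u hu => ⟨ht.trans_lt hu.1.1, hu.2⟩
    _ = L * R ^ 2 := by
        rw [← integral_of_le hR, intervalIntegral.integral_const_mul, integral_id]
        ring

theorem integral_le_integral_add_mul_sq (hL : 0 ≤ L) (hR : 0 ≤ R) (ht : 0 ≤ t) (hts : t ≤ s)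
    (hf : IntervalIntegrable f volume t s) (hf₀ : IntervalIntegrable f₀ volume t s)
    (hle : ∀ u ∈ Ioo t s, u ≤ R → f u ≤ f₀ u + 2 * L * u)
    (hleR : ∀ u ∈ Ioo t s, R < u → f u ≤ f₀ u) :
    ∫ u in t..s, f u ≤ (∫ u in t..s, f₀ u) + L * R ^ 2 := by
  set h := (Iic R).indicator (fun u => 2 * L * u)
  have hh : IntervalIntegrable h volume t s :=
    (intervalIntegrable_iff_integrableOn_Ioc_of_le hts).2 <|
      (continuous_const.mul continuous_id).integrableOn_Ioc.indicator measurableSet_Iic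
  have hpointwise : ∀ u ∈ Ioo t s, f u ≤ f₀ u + h u := by
    intro u hu
    by_cases huR : u ≤ R
    · simpa [h, indicator_of_mem (mem_Iic.2 huR)] using hle u hu huR
    · simpa [h, indicator_of_notMem (notMem_Iic.2 (not_le.1 huR))] using
        hleR u hu (not_le.1 huR)
  calc ∫ u in t..s, f u ≤ ∫ u in t..s, f₀ u + h u :=
        integral_mono_on_of_le_Ioo hts hf (hf₀.add hh) hpointwise
    _ = (∫ u in t..s, f₀ u) + ∫ u in t..s, h u := integral_add hf₀ hh
    _ ≤ (∫ u in t..s, f₀ u) + L * R ^ 2 := by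
        gcongr
        exact integral_indicator_Iic_mul_le hL hR ht hts

end Perturbation

section DoubleExpIntegral

variable {a R₁ M s : ℝ} {f f₀ : ℝ → ℝ}

theorem intervalIntegrable_exp_mul_integral (hf : IntegrableOn f (Ioc 0 R₁))
    (hs : s ∈ Icc 0 R₁) :
    IntervalIntegrable (fun t => exp (a * ∫ u in t..s, f u)) volume 0 s := by
  have hf' : IntegrableOn f (uIcc 0 s) := by
    rw [uIcc_of_le hs.1, integrableOn_Icc_iff_integrableOn_Ioc]
    exact hf.mono_set (Ioc_subset_Ioc le_rfl hs.2)
  exact (continuous_exp.comp_continuousOn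
    (continuousOn_const.mul (continuousOn_primitive_interval_left hf'))).intervalIntegrable

theorem doubleExpIntegral_le_exp_mul (ha : 0 ≤ a) (hR₁ : 0 ≤ R₁)
    (hf : IntegrableOn f (Ioc 0 R₁)) (hf₀ : IntegrableOn f₀ (Ioc 0 R₁))
    (houter : IntervalIntegrable (fun s => ∫ t in (0:ℝ)..s, exp (a * ∫ u in t..s, f u))
      volume 0 R₁)
    (houter₀ : IntervalIntegrable (fun s => ∫ t in (0:ℝ)..s, exp (a * ∫ u in t..s, f₀ u))
      volume 0 R₁)
    (hM : ∀ t s, 0 ≤ t → t ≤ s → s ≤ R₁ → ∫ u in t..s, f u ≤ (∫ u in t..s, f₀ u) + M) :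
    doubleExpIntegral a f R₁ ≤ exp (a * M) * doubleExpIntegral a f₀ R₁ := by
  have hinner : ∀ s ∈ Icc 0 R₁, ∫ t in (0:ℝ)..s, exp (a * ∫ u in t..s, f u) ≤
      exp (a * M) * ∫ t in (0:ℝ)..s, exp (a * ∫ u in t..s, f₀ u) := by
    intro s hs
    rw [← intervalIntegral.integral_const_mul]
    refine integral_mono_on hs.1 (intervalIntegrable_exp_mul_integral hf hs)
      ((intervalIntegrable_exp_mul_integral hf₀ hs).const_mul _) fun t ht => ?_
    rw [← exp_add, exp_le_exp, ← mul_add]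
    exact mul_le_mul_of_nonneg_left ((hM t s ht.1 ht.2 hs.2).trans_eq (add_comm _ _)) ha
  rw [doubleExpIntegral, doubleExpIntegral, ← intervalIntegral.integral_const_mul]
  exact integral_mono_on hR₁ houter (houter₀.const_mul _) hinner

theorem sq_div_two_le_doubleExpIntegral (ha : 0 ≤ a) (hR₁ : 0 ≤ R₁)
    (hf : IntegrableOn f (Ioc 0 R₁)) (hf_nonneg : ∀ u, 0 ≤ u → 0 ≤ f u)
    (houter : IntervalIntegrable (fun s => ∫ t in (0:ℝ)..s, exp (a * ∫ u in t..s, f u))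
      volume 0 R₁) :
    R₁ ^ 2 / 2 ≤ doubleExpIntegral a f R₁ := by
  have hinner : ∀ s ∈ Icc 0 R₁, s ≤ ∫ t in (0:ℝ)..s, exp (a * ∫ u in t..s, f u) := by
    intro s hs
    calc s = ∫ _ in (0:ℝ)..s, (1:ℝ) := by simp
      _ ≤ _ := integral_mono_on hs.1 intervalIntegrable_const
          (intervalIntegrable_exp_mul_integral hf hs) fun t ht => by
            rw [one_le_exp_iff]
            exact mul_nonneg ha
              (integral_nonneg ht.2 fun u hu => hf_nonneg u (ht.1.trans hu.1))
  calc R₁ ^ 2 / 2 = ∫ s in (0:ℝ)..R₁, s := by rw [integral_id]; ring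
    _ ≤ doubleExpIntegral a f R₁ := integral_mono_on hR₁ intervalIntegrable_id houter hinner

end DoubleExpIntegral

theorem contraction_rate_perturbation_general (κ κ₀ : ℝ → ℝ) (L R R₁ c c₀ : ℝ)
    (hL : 0 ≤ L) (hR : 0 ≤ R) (hR₁ : 0 < R₁)
    (hle : ∀ r, 0 < r → max (-κ r) 0 ≤ max (-κ₀ r) 0 + 2 * L)
    (hleR : ∀ r, R < r → max (-κ r) 0 ≤ max (-κ₀ r) 0)
    (hint : MeasureTheory.IntegrableOn (fun u => u * max (-κ u) 0) (Set.Ioc (0:ℝ) R₁))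
    (hint₀ : MeasureTheory.IntegrableOn (fun u => u * max (-κ₀ u) 0) (Set.Ioc (0:ℝ) R₁))
    (houter : IntervalIntegrable (fun s => ∫ t in (0:ℝ)..s,
        Real.exp ((1/4) * ∫ u in t..s, u * max (-κ u) 0)) MeasureTheory.volume 0 R₁)
    (houter₀ : IntervalIntegrable (fun s => ∫ t in (0:ℝ)..s,
        Real.exp ((1/4) * ∫ u in t..s, u * max (-κ₀ u) 0)) MeasureTheory.volume 0 R₁)
    (hc : c = 1 / ∫ s in (0:ℝ)..R₁, ∫ t in (0:ℝ)..s,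
        Real.exp ((1/4) * ∫ u in t..s, u * max (-κ u) 0))
    (hc₀ : c₀ = 1 / ∫ s in (0:ℝ)..R₁, ∫ t in (0:ℝ)..s,
        Real.exp ((1/4) * ∫ u in t..s, u * max (-κ₀ u) 0)) :
    c₀ * Real.exp (-(L * R ^ 2) / 4) ≤ c := by
  set f := fun u => u * max (-κ u) 0
  set f₀ := fun u => u * max (-κ₀ u) 0
  have hf : IntervalIntegrable f volume 0 R₁ :=
    (intervalIntegrable_iff_integrableOn_Ioc_of_le hR₁.le).2 hint
  have hf₀ : IntervalIntegrable f₀ volume 0 R₁ :=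
    (intervalIntegrable_iff_integrableOn_Ioc_of_le hR₁.le).2 hint₀
  have hexponent : ∀ t s, 0 ≤ t → t ≤ s → s ≤ R₁ →
      ∫ u in t..s, f u ≤ (∫ u in t..s, f₀ u) + L * R ^ 2 := by
    intro t s ht hts hs
    have hsub : uIcc t s ⊆ uIcc 0 R₁ := by
      rw [uIcc_of_le hts, uIcc_of_le hR₁.le]
      exact Icc_subset_Icc ht hs
    refine integral_le_integral_add_mul_sq hL hR ht hts (hf.mono_set hsub) (hf₀.mono_set hsub)
      (fun u hu _ => ?_) fun u hu huR => mul_le_mul_of_nonneg_left (hleR u huR) (ht.trans hu.1.le)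
    have hu : 0 < u := ht.trans_lt hu.1
    linarith [mul_le_mul_of_nonneg_left (hle u hu) hu.le]
  have hI := doubleExpIntegral_le_exp_mul (by norm_num) hR₁.le hint hint₀ houter houter₀ hexponent
  have hIpos : 0 < doubleExpIntegral (1/4) f R₁ := lt_of_lt_of_le (by positivity) <|
    sq_div_two_le_doubleExpIntegral (by norm_num) hR₁.le hint (fun u hu => by positivity) houter
  rw [hc, hc₀]
  calc 1 / doubleExpIntegral (1/4) f₀ R₁ * exp (-(L * R ^ 2) / 4)
      = 1 / (exp (1/4 * (L * R ^ 2)) * doubleExpIntegral (1/4) f₀ R₁) := by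
        rw [show -(L * R ^ 2) / 4 = -(1/4 * (L * R ^ 2)) by ring, exp_neg]
        ring
    _ ≤ 1 / doubleExpIntegral (1/4) f R₁ := one_div_le_one_div_of_le hIpos hI

theorem contraction_rate_perturbation (κ κ₀ : ℝ → ℝ) (L R R₁ c c₀ : ℝ)
    (hL : 0 ≤ L) (hR : 0 ≤ R) (hR₁ : 0 < R₁) (hRR₁ : R ≤ R₁)
    (hκcont : ContinuousOn κ (Set.Ioi 0))
    (hκ₀cont : ContinuousOn κ₀ (Set.Ioi 0))
    (hle : ∀ r, 0 < r → max (-κ r) 0 ≤ max (-κ₀ r) 0 + 2 * L)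
    (hleR : ∀ r, R < r → max (-κ r) 0 ≤ max (-κ₀ r) 0)
    (hint : MeasureTheory.IntegrableOn (fun u => u * max (-κ u) 0) (Set.Ioc (0:ℝ) R₁))
    (hint₀ : MeasureTheory.IntegrableOn (fun u => u * max (-κ₀ u) 0) (Set.Ioc (0:ℝ) R₁))
    (houter : IntervalIntegrable (fun s => ∫ t in (0:ℝ)..s,
        Real.exp ((1/4) * ∫ u in t..s, u * max (-κ u) 0)) MeasureTheory.volume 0 R₁)
    (houter₀ : IntervalIntegrable (fun s => ∫ t in (0:ℝ)..s,
        Real.exp ((1/4) * ∫ u in t..s, u * max (-κ₀ u) 0)) MeasureTheory.volume 0 R₁)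
    (hc : c = 1 / ∫ s in (0:ℝ)..R₁, ∫ t in (0:ℝ)..s,
        Real.exp ((1/4) * ∫ u in t..s, u * max (-κ u) 0))
    (hc₀ : c₀ = 1 / ∫ s in (0:ℝ)..R₁, ∫ t in (0:ℝ)..s,
        Real.exp ((1/4) * ∫ u in t..s, u * max (-κ₀ u) 0)) :
    c₀ * Real.exp (-(L * R ^ 2) / 4) ≤ c :=
  contraction_rate_perturbation_general κ κ₀ L R R₁ c c₀ hL hR hR₁ hle hleR hint hint₀ houter
    houter₀ hc hc₀
end

section
/- For d ≥ 1 and real vectors x = (x¹,…,x^{d−1}) ∈ ℝ^{d−1}, with the convention x⁰ = x^d = 0, the discrete Poincaré inequality holds: ∑_{i=1}^{d} |xⁱ − x^{i−1}|² ≥ 2·(1 − cos(π/d))·∑_{i=1}^{d−1} |xⁱ|². -/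
/-!
Compare the Dirichlet energy with the lowest eigenvector `s j = sin (j π / d)` of the discrete
Laplacian, which is positive on the interior and satisfies `s (j+1) + s (j-1) = 2 cos (π / d) s j`.
Bounding each cross term `x i x (i+1)` by AM-GM with the weights `s (i+1) / s i` and `s i / s (i+1)`
and regrouping by `x i ^ 2` gives `∑ x i x (i+1) ≤ cos (π / d) ∑ x i ^ 2`, and the Dirichlet
energy is `2 ∑ x i ^ 2 - 2 ∑ x i x (i+1)`.
-/

open Finset Real

lemma mul_le_div_mul_sq_add_div_mul_sq {a b : ℝ} (ha : 0 < a) (hb : 0 < b) (u v : ℝ) :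
    u * v ≤ b / (2 * a) * u ^ 2 + a / (2 * b) * v ^ 2 := by
  rw [div_mul_eq_mul_div, div_mul_eq_mul_div, div_add_div _ _ (by positivity) (by positivity),
    le_div_iff₀ (by positivity)]
  nlinarith [sq_nonneg (b * u - a * v), mul_pos ha hb]

lemma sum_range_succ_eq_sum_range {f : ℕ → ℝ} {d : ℕ} (h : f 0 = f d) :
    ∑ i ∈ range d, f (i + 1) = ∑ i ∈ range d, f i := by
  have := sum_range_sub f d
  rw [sum_sub_distrib, h, sub_self] at this
  linarith

lemma sum_range_sub_sq_eq {x : ℕ → ℝ} {d : ℕ} (h0 : x 0 = 0) (hd : x d = 0) :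
    ∑ i ∈ range d, (x (i + 1) - x i) ^ 2
      = 2 * ∑ i ∈ range d, x i ^ 2 - 2 * ∑ i ∈ range d, x i * x (i + 1) := by
  have hshift : ∑ i ∈ range d, x (i + 1) ^ 2 = ∑ i ∈ range d, x i ^ 2 :=
    sum_range_succ_eq_sum_range (f := fun i ↦ x i ^ 2) (by simp [h0, hd])
  have hexpand : ∀ i, (x (i + 1) - x i) ^ 2 = x (i + 1) ^ 2 + x i ^ 2 - 2 * (x i * x (i + 1)) :=
    fun i ↦ by ring
  simp only [hexpand, sum_sub_distrib, sum_add_distrib, hshift, ← mul_sum]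
  ring

lemma sum_mul_succ_le_of_supersolution {s x : ℕ → ℝ} {c : ℝ} {d : ℕ}
    (hs0 : 0 ≤ s 0) (hsd : 0 ≤ s d) (hs_pos : ∀ i, 0 < i → i < d → 0 < s i)
    (hsuper : ∀ i, 0 < i → i < d → s (i + 1) + s (i - 1) ≤ 2 * c * s i)
    (hx0 : x 0 = 0) (hxd : x d = 0) :
    ∑ i ∈ range d, x i * x (i + 1) ≤ c * ∑ i ∈ range d, x i ^ 2 := by
  have hs_nonneg : ∀ i ≤ d, 0 ≤ s i := fun i hi ↦ by
    rcases Nat.eq_zero_or_pos i with rfl | hi0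
    · exact hs0
    rcases hi.lt_or_eq with hid | rfl
    · exact (hs_pos i hi0 hid).le
    · exact hsd
  -- `A 0` and `B d` may divide by `s 0 = 0` or `s d = 0`; they vanish through `x 0 = x d = 0`.
  set A : ℕ → ℝ := fun i ↦ s (i + 1) / (2 * s i) * x i ^ 2
  set B : ℕ → ℝ := fun i ↦ s (i - 1) / (2 * s i) * x i ^ 2
  have hpair : ∀ i ∈ range d, x i * x (i + 1) ≤ A i + B (i + 1) := by
    intro i hi
    have hid : i < d := mem_range.mp hi
    by_cases hx : x i = 0 ∨ x (i + 1) = 0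
    · have := hs_nonneg i hid.le
      have := hs_nonneg (i + 1) hid
      have hAB : 0 ≤ A i + B (i + 1) := by simp only [A, B, Nat.add_sub_cancel]; positivity
      rcases hx with hx | hx <;> simpa [hx] using hAB
    push Not at hx
    have hi0 : 0 < i := Nat.pos_of_ne_zero fun h ↦ hx.1 (h ▸ hx0)
    have hi1 : i + 1 < d := lt_of_le_of_ne hid fun h ↦ hx.2 (h ▸ hxd)
    simpa only [A, B, Nat.add_sub_cancel] using
      mul_le_div_mul_sq_add_div_mul_sq (hs_pos i hi0 hid) (hs_pos (i + 1) (by omega) hi1) _ _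
  have hB : ∑ i ∈ range d, B (i + 1) = ∑ i ∈ range d, B i :=
    sum_range_succ_eq_sum_range (by simp [B, hx0, hxd])
  have hregroup : ∀ i ∈ range d, A i + B i ≤ c * x i ^ 2 := by
    intro i hi
    rcases Nat.eq_zero_or_pos i with rfl | hi0
    · simp [A, B, hx0]
    have hsi := hs_pos i hi0 (mem_range.mp hi)
    calc A i + B i = (s (i + 1) + s (i - 1)) / (2 * s i) * x i ^ 2 := by simp only [A, B]; ring
      _ ≤ 2 * c * s i / (2 * s i) * x i ^ 2 := by
          gcongr; exact hsuper i hi0 (mem_range.mp hi)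
      _ = c * x i ^ 2 := by field_simp
  calc ∑ i ∈ range d, x i * x (i + 1) ≤ ∑ i ∈ range d, (A i + B (i + 1)) := sum_le_sum hpair
    _ = ∑ i ∈ range d, (A i + B i) := by rw [sum_add_distrib, hB, sum_add_distrib]
    _ ≤ ∑ i ∈ range d, c * x i ^ 2 := sum_le_sum hregroup
    _ = c * ∑ i ∈ range d, x i ^ 2 := (mul_sum ..).symm

lemma sin_succ_mul_add_sin_pred_mul (θ : ℝ) {i : ℕ} (hi : 0 < i) :
    sin ((i + 1 : ℕ) * θ) + sin ((i - 1 : ℕ) * θ) = 2 * cos θ * sin (i * θ) := by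
  obtain ⟨k, rfl⟩ := Nat.exists_eq_add_of_lt hi
  rw [mul_right_comm, two_mul_sin_mul_cos]
  push_cast
  ring_nf

lemma sin_nat_mul_pi_div_pos {i d : ℕ} (hi : 0 < i) (hid : i < d) :
    0 < sin (i * (π / d)) := by
  have hd : (0 : ℝ) < d := by exact_mod_cast hi.trans hid
  apply sin_pos_of_pos_of_lt_pi (by positivity)
  rw [← mul_div_assoc, div_lt_iff₀ hd, mul_comm π]
  gcongr

lemma sin_nat_mul_pi_div_self (d : ℕ) : sin (d * (π / d)) = 0 := by
  rcases eq_or_ne (d : ℝ) 0 with hd | hd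
  · simp [hd]
  · rw [mul_div_cancel₀ _ hd, sin_pi]

theorem discrete_poincare_general (d : ℕ) (x : ℕ → ℝ)
    (h0 : x 0 = 0) (hdd : x d = 0) :
    2 * (1 - Real.cos (Real.pi / d)) * ∑ i ∈ Finset.Ico 1 d, (x i) ^ 2
      ≤ ∑ i ∈ Finset.range d, (x (i + 1) - x i) ^ 2 := by
  have hcross := sum_mul_succ_le_of_supersolution (s := fun j ↦ sin (j * (π / d)))
    (c := cos (π / d)) (by simp) (sin_nat_mul_pi_div_self d).ge
    (fun _ ↦ sin_nat_mul_pi_div_pos)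
    (fun i hi _ ↦ (sin_succ_mul_add_sin_pred_mul _ hi).le) h0 hdd
  have hIco : ∑ i ∈ Ico 1 d, x i ^ 2 = ∑ i ∈ range d, x i ^ 2 :=
    sum_subset (fun i ↦ by simp only [mem_Ico, mem_range]; omega)
      (fun i hid hi ↦ by
        obtain rfl : i = 0 := by simp only [mem_Ico, mem_range] at hi hid; omega
        simp [h0])
  rw [hIco, sum_range_sub_sq_eq h0 hdd]
  linarith

theorem discrete_poincare (d : ℕ) (hd : 1 ≤ d) (x : ℕ → ℝ)
    (h0 : x 0 = 0) (hdd : x d = 0) :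
    2 * (1 - Real.cos (Real.pi / d)) * ∑ i ∈ Finset.Ico 1 d, (x i) ^ 2
      ≤ ∑ i ∈ Finset.range d, (x (i + 1) - x i) ^ 2 :=
  discrete_poincare_general d x h0 hdd
end
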